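/- Let H be a weak bialgebra over a field k, U: M^H → Vect_k the forgetful functor from finite-dimensional right H-comodules with its separable Frobenius structure. Then there are functors Φ: M_{(M^H,U)} → M_H and Ψ: M_H → M_{(M^H,U)} between the category of finite-dimensional right (M^H,U)-modules and the category of finite-dimensional right H-modules, with Φ ∘ Ψ = 1_{M_H}. Here Φ sends (V, c_V) to V with action γ_V = λ_V ∘ (ε ⊗ id_V) ∘ (c_V)_H, and Ψ sends (V, γ_V) to (V, c_V) with (c_V)_X = α ∘ (τ_{V,UX} ⊗ id) ∘ α^{-1} ∘ (id_V ⊗ β_X) followed by (id_{UX} ⊗ γ_V). -/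

import Mathlib

open TensorProduct LinearMap

namespace WeakBialgebraPaper

variable (k H : Type*) [CommRing k] [Ring H] [Algebra k H] [Coalgebra k H]

/-- `x ⊗ y ↦ ε (x * y)`. -/
noncomputable def counitMul : H ⊗[k] H →ₗ[k] k :=
  Coalgebra.counit ∘ₗ LinearMap.mul' k H

/-- ε∘μ∘(μ⊗id) : (H⊗H)⊗H → k -/
noncomputable def weakCounitLHS : (H ⊗[k] H) ⊗[k] H →ₗ[k] k :=
  Coalgebra.counit ∘ₗ LinearMap.mul' k H ∘ₗ LinearMap.rTensor H (LinearMap.mul' k H)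

/-- (ε⊗ε)∘(μ⊗μ)∘(id⊗Δ⊗id), with `Δ' = d` inserted in the middle slot. -/
noncomputable def weakCounitRHS (d : H →ₗ[k] H ⊗[k] H) : (H ⊗[k] H) ⊗[k] H →ₗ[k] k :=
  (TensorProduct.lid k k).toLinearMap
    ∘ₗ TensorProduct.map (counitMul k H) (counitMul k H)
    ∘ₗ (TensorProduct.assoc k (H ⊗[k] H) H H).toLinearMap
    ∘ₗ LinearMap.rTensor H (TensorProduct.assoc k H H H).symm.toLinearMap
    ∘ₗ LinearMap.rTensor H (LinearMap.lTensor H d)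

/-- (id⊗μ'⊗id)∘(Δ⊗Δ) applied to 1⊗1, with multiplication `m` in the middle. -/
noncomputable def weakUnitRHS (m : H ⊗[k] H →ₗ[k] H) : (H ⊗[k] H) ⊗[k] H :=
  (LinearMap.rTensor H (LinearMap.lTensor H m))
    ((LinearMap.rTensor H (TensorProduct.assoc k H H H).toLinearMap)
      ((TensorProduct.assoc k (H ⊗[k] H) H H).symm
        (Coalgebra.comul (R := k) (1 : H) ⊗ₜ[k] Coalgebra.comul (R := k) (1 : H))))

/-- A weak bialgebra in the sense of Böhm–Nill–Szlachányi. -/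
class WeakBialgebra : Prop where
  comul_mul : ∀ x y : H, Coalgebra.comul (R := k) (x * y) = Coalgebra.comul x * Coalgebra.comul y
  weak_counit :
    weakCounitLHS k H = weakCounitRHS k H Coalgebra.comul
  weak_counit_op :
    weakCounitLHS k H =
      weakCounitRHS k H ((TensorProduct.comm k H H).toLinearMap ∘ₗ Coalgebra.comul)
  weak_unit :
    LinearMap.rTensor H (Coalgebra.comul (R := k)) (Coalgebra.comul (R := k) (1 : H)) =
      weakUnitRHS k H (LinearMap.mul' k H)
  weak_unit_op :
    LinearMap.rTensor H (Coalgebra.comul (R := k)) (Coalgebra.comul (R := k) (1 : H)) =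
      weakUnitRHS k H (LinearMap.mul' k H ∘ₗ (TensorProduct.comm k H H).toLinearMap)

/-- The target counital map `ε_t(x) = ε(1' x) 1''`. -/
noncomputable def εt : H →ₗ[k] H :=
  (TensorProduct.rid k H).toLinearMap
    ∘ₗ LinearMap.lTensor H (counitMul k H)
    ∘ₗ (TensorProduct.assoc k H H H).toLinearMap
    ∘ₗ LinearMap.rTensor H (TensorProduct.comm k H H).toLinearMap
    ∘ₗ TensorProduct.mk k (H ⊗[k] H) H (Coalgebra.comul (R := k) (1 : H))

/-- The source counital map `ε_s(x) = 1' ε(x 1'')`. -/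
noncomputable def εs : H →ₗ[k] H :=
  (TensorProduct.rid k H).toLinearMap
    ∘ₗ LinearMap.lTensor H (counitMul k H ∘ₗ (TensorProduct.comm k H H).toLinearMap)
    ∘ₗ (TensorProduct.assoc k H H H).toLinearMap
    ∘ₗ TensorProduct.mk k (H ⊗[k] H) H (Coalgebra.comul (R := k) (1 : H))

end WeakBialgebraPaper

namespace WeakBialgebraPaper

variable (k H : Type*) [CommRing k] [Ring H] [Algebra k H] [Coalgebra k H]

/-- `S` is an antipode for the weak bialgebra `H`:
`x' S(x'') = ε_t(x)`, `S(x') x'' = ε_s(x)` and `S(x') x'' S(x''') = S(x)`. -/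
noncomputable def IsAntipode (S : H →ₗ[k] H) : Prop :=
  (LinearMap.mul' k H ∘ₗ LinearMap.lTensor H S ∘ₗ Coalgebra.comul = εt k H) ∧
  (LinearMap.mul' k H ∘ₗ LinearMap.rTensor H S ∘ₗ Coalgebra.comul = εs k H) ∧
  (LinearMap.mul' k H ∘ₗ LinearMap.rTensor H (LinearMap.mul' k H)
      ∘ₗ TensorProduct.map (LinearMap.rTensor H S) S
      ∘ₗ LinearMap.rTensor H (Coalgebra.comul (R := k))
      ∘ₗ Coalgebra.comul = S)

end WeakBialgebraPaper

namespace WeakBialgebraPaper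

variable (k H : Type*) [CommRing k] [Ring H] [Algebra k H] [Coalgebra k H]

/-- Convolution product of linear forms, `(f * g)(x) = f(x') g(x'')`. -/
noncomputable def conv (f g : H →ₗ[k] k) : H →ₗ[k] k :=
  (TensorProduct.lid k k).toLinearMap ∘ₗ TensorProduct.map f g ∘ₗ Coalgebra.comul

/-- `x ⊗ y ↦ f(x) g(y)`. -/
noncomputable def pairForm (f g : H →ₗ[k] k) : H ⊗[k] H →ₗ[k] k :=
  (TensorProduct.lid k k).toLinearMap ∘ₗ TensorProduct.map f g

/-- `f` is a dual group-like linear form with convolution inverse `fbar`: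
`f` and `fbar` are mutually convolution inverse and
`f(x')f(y')ε(x''y'') = f(xy) = ε(x'y')f(x'')f(y'')`. -/
noncomputable def IsDualGroupLike (f fbar : H →ₗ[k] k) : Prop :=
  conv k H f fbar = Coalgebra.counit ∧
  conv k H fbar f = Coalgebra.counit ∧
  ((TensorProduct.lid k k).toLinearMap
      ∘ₗ TensorProduct.map (pairForm k H f f) (counitMul k H)
      ∘ₗ (TensorProduct.tensorTensorTensorComm k H H H H).toLinearMap
      ∘ₗ TensorProduct.map (Coalgebra.comul (R := k)) (Coalgebra.comul (R := k))
    = f ∘ₗ LinearMap.mul' k H) ∧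
  ((TensorProduct.lid k k).toLinearMap
      ∘ₗ TensorProduct.map (counitMul k H) (pairForm k H f f)
      ∘ₗ (TensorProduct.tensorTensorTensorComm k H H H H).toLinearMap
      ∘ₗ TensorProduct.map (Coalgebra.comul (R := k)) (Coalgebra.comul (R := k))
    = f ∘ₗ LinearMap.mul' k H)

end WeakBialgebraPaper

namespace WeakBialgebraPaper

variable (k H : Type*) [CommRing k] [Ring H] [Algebra k H] [Coalgebra k H]

/-- `(S, w, wbar)` is a copivotal structure: `S` is an antipode, `w` is dual group-like
with convolution inverse `wbar`, and `S²(x) = w(x') x'' w̄(x''')`. -/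
noncomputable def IsCopivotal (S : H →ₗ[k] H) (w wbar : H →ₗ[k] k) : Prop :=
  IsAntipode k H S ∧ IsDualGroupLike k H w wbar ∧
  S ∘ₗ S =
    (TensorProduct.rid k H).toLinearMap
      ∘ₗ TensorProduct.map
          ((TensorProduct.lid k H).toLinearMap ∘ₗ TensorProduct.map w LinearMap.id) wbar
      ∘ₗ LinearMap.rTensor H (Coalgebra.comul (R := k))
      ∘ₗ Coalgebra.comul

variable {k H} in
/-- `β : V → V ⊗ H` is a right coaction of `H` on `V`. -/
noncomputable def IsCoaction {V : Type*} [AddCommGroup V] [Module k V]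
    (β : V →ₗ[k] V ⊗[k] H) : Prop :=
  ((TensorProduct.assoc k V H H).toLinearMap ∘ₗ LinearMap.rTensor H β ∘ₗ β =
      LinearMap.lTensor V (Coalgebra.comul (R := k)) ∘ₗ β) ∧
  ((TensorProduct.rid k V).toLinearMap ∘ₗ
      LinearMap.lTensor V (Coalgebra.counit (R := k)) ∘ₗ β = LinearMap.id)

variable {k H} in
/-- `v ↦ v_V • f(v_H)`, the contraction of the coaction with a linear form `f`. -/
noncomputable def coform {V : Type*} [AddCommGroup V] [Module k V]
    (f : H →ₗ[k] k) (β : V →ₗ[k] V ⊗[k] H) : V →ₗ[k] V :=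
  (TensorProduct.rid k V).toLinearMap ∘ₗ LinearMap.lTensor V f ∘ₗ β

end WeakBialgebraPaper

namespace WeakBialgebraPaper

universe u

variable (k H : Type u) [CommRing k] [Ring H] [Algebra k H] [Coalgebra k H]

variable {k H} in
/-- The idempotent `P_{X,Y}(x ⊗ y) = (x_X ⊗ y_Y) ε(x_H y_H)` defining the truncated
tensor product of two comodules. -/
noncomputable def truncIdem {X Y : Type u} [AddCommGroup X] [Module k X]
    [AddCommGroup Y] [Module k Y] (βX : X →ₗ[k] X ⊗[k] H) (βY : Y →ₗ[k] Y ⊗[k] H) :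
    X ⊗[k] Y →ₗ[k] X ⊗[k] Y :=
  (TensorProduct.rid k (X ⊗[k] Y)).toLinearMap
    ∘ₗ LinearMap.lTensor (X ⊗[k] Y) (counitMul k H)
    ∘ₗ (TensorProduct.tensorTensorTensorComm k X H Y H).toLinearMap
    ∘ₗ TensorProduct.map βX βY

variable {k H} in
/-- The coaction `x ⊗ y ↦ (x_X ⊗ y_Y) ⊗ (x_H y_H)` on the tensor product. -/
noncomputable def prodCoaction {X Y : Type u} [AddCommGroup X] [Module k X]
    [AddCommGroup Y] [Module k Y] (βX : X →ₗ[k] X ⊗[k] H) (βY : Y →ₗ[k] Y ⊗[k] H) :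
    X ⊗[k] Y →ₗ[k] (X ⊗[k] Y) ⊗[k] H :=
  LinearMap.lTensor (X ⊗[k] Y) (LinearMap.mul' k H)
    ∘ₗ (TensorProduct.tensorTensorTensorComm k X H Y H).toLinearMap
    ∘ₗ TensorProduct.map βX βY

variable {k H} in
/-- Projection onto the truncated tensor product `X ⊗̂ Y = P_{X,Y}(X ⊗ Y)`. -/
noncomputable def truncProj {X Y : Type u} [AddCommGroup X] [Module k X]
    [AddCommGroup Y] [Module k Y] (βX : X →ₗ[k] X ⊗[k] H) (βY : Y →ₗ[k] Y ⊗[k] H) :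
    X ⊗[k] Y →ₗ[k] ↥(LinearMap.range (truncIdem βX βY)) :=
  LinearMap.codRestrict _ (truncIdem βX βY) fun x => LinearMap.mem_range_self _ x

variable {k H} in
/-- The coaction on the truncated tensor product `X ⊗̂ Y`. -/
noncomputable def truncCoaction {X Y : Type u} [AddCommGroup X] [Module k X]
    [AddCommGroup Y] [Module k Y] (βX : X →ₗ[k] X ⊗[k] H) (βY : Y →ₗ[k] Y ⊗[k] H) :
    ↥(LinearMap.range (truncIdem βX βY)) →ₗ[k]
      ↥(LinearMap.range (truncIdem βX βY)) ⊗[k] H :=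
  LinearMap.rTensor H (truncProj βX βY) ∘ₗ prodCoaction βX βY
    ∘ₗ (LinearMap.range (truncIdem βX βY)).subtype

/-- Projection of `H` onto the source base algebra `H_s`. -/
noncomputable def sourceProj : H →ₗ[k] ↥(LinearMap.range (εs k H)) :=
  LinearMap.codRestrict _ (εs k H) fun x => LinearMap.mem_range_self _ x

/-- The coaction on the monoidal unit `H_s` of the category of comodules,
`x ↦ x' ⊗ x''`. -/
noncomputable def unitCoaction :
    ↥(LinearMap.range (εs k H)) →ₗ[k] ↥(LinearMap.range (εs k H)) ⊗[k] H :=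
  LinearMap.rTensor H (sourceProj k H) ∘ₗ Coalgebra.comul
    ∘ₗ (LinearMap.range (εs k H)).subtype

/-- The lax unit `U_0 = η : k → H_s` of the forgetful functor. -/
noncomputable def unitLax : k →ₗ[k] ↥(LinearMap.range (εs k H)) :=
  sourceProj k H ∘ₗ Algebra.linearMap k H

/-- The oplax unit `U^0 = ε|_{H_s} : H_s → k` of the forgetful functor. -/
noncomputable def unitOplax : ↥(LinearMap.range (εs k H)) →ₗ[k] k :=
  Coalgebra.counit ∘ₗ (LinearMap.range (εs k H)).subtype

variable (V : Type u) [AddCommGroup V] [Module k V]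

/-- The data of a right `(M^H, U)`-module structure on the vector space `V`:
a family of maps `c_X : V ⊗ UX → UX ⊗ V` indexed by all right `H`-comodules `X`. -/
structure CModuleStr where
  c : ∀ (X : Type u) [AddCommGroup X] [Module k X],
        (X →ₗ[k] X ⊗[k] H) → (V ⊗[k] X →ₗ[k] X ⊗[k] V)

variable {k H V} in
/-- The axioms of a right `(M^H, U)`-module `(V, c)`: naturality of `c`, the unit axiom
and the multiplication axiom with respect to the separable Frobenius structure of the
forgetful functor `U : M^H → Vect_k`. -/
noncomputable def IsCModule (cV : CModuleStr k H V) : Prop :=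
  -- naturality in `X`
  (∀ (X Y : Type u) [AddCommGroup X] [Module k X] [AddCommGroup Y] [Module k Y]
      (βX : X →ₗ[k] X ⊗[k] H) (βY : Y →ₗ[k] Y ⊗[k] H),
      IsCoaction βX → IsCoaction βY →
      ∀ g : X →ₗ[k] Y, βY ∘ₗ g = LinearMap.rTensor H g ∘ₗ βX →
        LinearMap.rTensor V g ∘ₗ cV.c X βX = cV.c Y βY ∘ₗ LinearMap.lTensor V g) ∧
  -- unit axiom
  (∀ v : V,
    (TensorProduct.map (unitOplax k H) (LinearMap.id (M := V)))
        ((cV.c _ (unitCoaction k H)) (v ⊗ₜ[k] unitLax k H 1)) = (1 : k) ⊗ₜ[k] v) ∧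
  -- multiplication axiom
  (∀ (X Y : Type u) [AddCommGroup X] [Module k X] [AddCommGroup Y] [Module k Y]
      (βX : X →ₗ[k] X ⊗[k] H) (βY : Y →ₗ[k] Y ⊗[k] H),
      IsCoaction βX → IsCoaction βY →
      LinearMap.rTensor V (LinearMap.range (truncIdem βX βY)).subtype
          ∘ₗ cV.c _ (truncCoaction βX βY)
          ∘ₗ LinearMap.lTensor V (truncProj βX βY) =
        (TensorProduct.assoc k X Y V).symm.toLinearMap
          ∘ₗ LinearMap.lTensor X (cV.c Y βY)
          ∘ₗ (TensorProduct.assoc k X V Y).toLinearMap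
          ∘ₗ LinearMap.rTensor Y (cV.c X βX)
          ∘ₗ (TensorProduct.assoc k V X Y).symm.toLinearMap)

variable {k H V} in
/-- The functor `Φ`: from a right `(M^H,U)`-module structure `c` on `V`, the right
`H`-action `γ_V = λ_V ∘ (ε ⊗ id_V) ∘ (c_V)_H` on `V`. -/
noncomputable def PhiAction (cV : CModuleStr k H V) : V ⊗[k] H →ₗ[k] V :=
  (TensorProduct.lid k V).toLinearMap
    ∘ₗ TensorProduct.map (Coalgebra.counit (R := k)) (LinearMap.id (M := V))
    ∘ₗ cV.c H Coalgebra.comul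

variable {k H V} in
/-- The functor `Ψ`: from a right `H`-action `γ` on `V`, the right `(M^H,U)`-module
structure `(c_V)_X = (id_{UX} ⊗ γ) ∘ α ∘ (τ_{V,UX} ⊗ id) ∘ α⁻¹ ∘ (id_V ⊗ β_X)`. -/
noncomputable def PsiStr (γ : V ⊗[k] H →ₗ[k] V) : CModuleStr k H V where
  c X _ _ βX :=
    LinearMap.lTensor X γ
      ∘ₗ (TensorProduct.assoc k X V H).toLinearMap
      ∘ₗ LinearMap.rTensor H (TensorProduct.comm k V X).toLinearMap
      ∘ₗ (TensorProduct.assoc k V X H).symm.toLinearMap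
      ∘ₗ LinearMap.lTensor V βX

variable {k H} in
/-- `γ : V ⊗ H → V` is a right action of the algebra `H` on `V`. -/
noncomputable def IsAction {V : Type u} [AddCommGroup V] [Module k V]
    (γ : V ⊗[k] H →ₗ[k] V) : Prop :=
  (∀ v : V, γ (v ⊗ₜ[k] (1 : H)) = v) ∧
  γ ∘ₗ LinearMap.rTensor H γ =
    γ ∘ₗ LinearMap.lTensor V (LinearMap.mul' k H)
      ∘ₗ (TensorProduct.assoc k V H H).toLinearMap

end WeakBialgebraPaper


namespace WeakBialgebraPaper

universe u
variable {k H : Type u} [CommRing k] [Ring H] [Algebra k H] [Coalgebra k H]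

open TensorProduct LinearMap Coalgebra

lemma aux_rid_lTensor_rTensor {M N C : Type u} [AddCommGroup M] [Module k M]
    [AddCommGroup N] [Module k N] [AddCommGroup C] [Module k C]
    (f : M →ₗ[k] N) (g : C →ₗ[k] k) :
    (TensorProduct.rid k N).toLinearMap ∘ₗ lTensor N g ∘ₗ rTensor C f
      = f ∘ₗ (TensorProduct.rid k M).toLinearMap ∘ₗ lTensor M g := by
  apply TensorProduct.ext'; intro m c; simp

lemma aux_assoc_rTensor_rTensor {M N P Q : Type u} [AddCommGroup M] [Module k M]
    [AddCommGroup N] [Module k N] [AddCommGroup P] [Module k P]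
    [AddCommGroup Q] [Module k Q] (f : M →ₗ[k] N) :
    (TensorProduct.assoc k N P Q).toLinearMap ∘ₗ rTensor Q (rTensor P f)
      = rTensor (P ⊗[k] Q) f ∘ₗ (TensorProduct.assoc k M P Q).toLinearMap := by
  apply TensorProduct.ext_threefold; intro m p q; simp

lemma isCoaction_comul : IsCoaction (k := k) (Coalgebra.comul (R := k) (A := H)) := by
  constructor
  · exact Coalgebra.coassoc
  · apply LinearMap.ext; intro a
    simp [Coalgebra.lTensor_counit_comul (R := k) a]

lemma PsiStr_apply {V X : Type u} [AddCommGroup V] [Module k V] [AddCommGroup X]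
    [Module k X] (γ : V ⊗[k] H →ₗ[k] V) (βX : X →ₗ[k] X ⊗[k] H) (v : V) (x : X) :
    (PsiStr γ).c X βX (v ⊗ₜ[k] x)
      = lTensor X (γ ∘ₗ TensorProduct.mk k V H v) (βX x) := by
  have key : ∀ t : X ⊗[k] H,
      lTensor X γ ((TensorProduct.assoc k X V H)
        ((rTensor H (TensorProduct.comm k V X).toLinearMap)
          ((TensorProduct.assoc k V X H).symm (v ⊗ₜ[k] t))))
        = lTensor X (γ ∘ₗ TensorProduct.mk k V H v) t := by
    intro t
    induction t using TensorProduct.induction_on with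
    | zero => simp
    | tmul a b => simp
    | add a b ha hb => simp only [tmul_add, map_add, ha, hb]
  simp only [PsiStr, LinearMap.comp_apply, LinearEquiv.coe_coe, lTensor_tmul]
  exact key (βX x)

lemma Phi_Psi_ptwise {V : Type u} [AddCommGroup V] [Module k V]
    (γ : V ⊗[k] H →ₗ[k] V) : PhiAction (PsiStr γ) = γ := by
  apply TensorProduct.ext'; intro v x
  have key : ∀ t : H ⊗[k] H,
      (TensorProduct.lid k V) (TensorProduct.map Coalgebra.counit LinearMap.id
        (lTensor H (γ ∘ₗ TensorProduct.mk k V H v) t))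
        = (γ ∘ₗ TensorProduct.mk k V H v)
            ((TensorProduct.lid k H) (rTensor H (Coalgebra.counit (R := k)) t)) := by
    intro t
    induction t using TensorProduct.induction_on with
    | zero => simp
    | tmul a b => simp
    | add a b ha hb => simp only [map_add, ha, hb]
  simp only [PhiAction, LinearMap.comp_apply, LinearEquiv.coe_coe,
    PsiStr_apply γ Coalgebra.comul v x, key (Coalgebra.comul x),
    Coalgebra.rTensor_counit_comul]
  simp


set_option linter.unusedSectionVars false
set_option synthInstance.maxHeartbeats 800000
set_option maxHeartbeats 1600000

lemma Phi_mor {V W : Type u} [AddCommGroup V] [Module k V] [AddCommGroup W] [Module k W]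
    (cV : CModuleStr k H V) (cW : CModuleStr k H W) (φ : V →ₗ[k] W)
    (hφ : cW.c H Coalgebra.comul ∘ₗ rTensor H φ = lTensor H φ ∘ₗ cV.c H Coalgebra.comul) :
    φ ∘ₗ PhiAction cV = PhiAction cW ∘ₗ rTensor H φ := by
  apply TensorProduct.ext'; intro v x
  have key : ∀ q : H ⊗[k] V,
      φ ((TensorProduct.lid k V) (TensorProduct.map Coalgebra.counit LinearMap.id q))
        = (TensorProduct.lid k W) (TensorProduct.map Coalgebra.counit LinearMap.id
            (lTensor H φ q)) := by
    intro q; induction q using TensorProduct.induction_on with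
    | zero => simp
    | tmul a b => simp
    | add a b ha hb => simp only [map_add, ha, hb]
  have h2 := LinearMap.congr_fun hφ (v ⊗ₜ[k] x)
  simp only [LinearMap.comp_apply, rTensor_tmul] at h2
  simp only [PhiAction, LinearMap.comp_apply, LinearEquiv.coe_coe, rTensor_tmul, key, h2]

lemma Psi_mor {V W X : Type u} [AddCommGroup V] [Module k V] [AddCommGroup W] [Module k W]
    [AddCommGroup X] [Module k X]
    (γV : V ⊗[k] H →ₗ[k] V) (γW : W ⊗[k] H →ₗ[k] W) (φ : V →ₗ[k] W)
    (hφ : φ ∘ₗ γV = γW ∘ₗ rTensor H φ) (βX : X →ₗ[k] X ⊗[k] H) :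
    (PsiStr γW).c X βX ∘ₗ rTensor X φ = lTensor X φ ∘ₗ (PsiStr γV).c X βX := by
  apply TensorProduct.ext'; intro v x
  have h1 : γW ∘ₗ TensorProduct.mk k W H (φ v)
      = φ ∘ₗ (γV ∘ₗ TensorProduct.mk k V H v) := by
    apply LinearMap.ext; intro h
    have := LinearMap.congr_fun hφ (v ⊗ₜ[k] h)
    simp only [LinearMap.comp_apply, rTensor_tmul, TensorProduct.mk_apply] at this ⊢
    exact this.symm
  simp only [LinearMap.comp_apply, rTensor_tmul, PsiStr_apply, h1]
  rw [← LinearMap.comp_apply (lTensor X φ), ← lTensor_comp]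


lemma aux_map_mul_mul (u v : H ⊗[k] H) :
    TensorProduct.map (mul' k H) (mul' k H)
      ((TensorProduct.tensorTensorTensorComm k H H H H) (u ⊗ₜ[k] v)) = u * v := by
  induction u using TensorProduct.induction_on with
  | zero => simp
  | tmul a b =>
    induction v using TensorProduct.induction_on with
    | zero => simp
    | tmul c d => simp [Algebra.TensorProduct.tmul_mul_tmul]
    | add s t hs ht => simp only [tmul_add, map_add, hs, ht, mul_add]
  | add s t hs ht => simp only [add_tmul, map_add, hs, ht, add_mul]

lemma theta_r [WeakBialgebra k H] (a b : H) :
    (TensorProduct.lid k H) (TensorProduct.map (counitMul k H) (mul' k H)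
      ((TensorProduct.tensorTensorTensorComm k H H H H)
        (Coalgebra.comul a ⊗ₜ[k] Coalgebra.comul b))) = a * b := by
  have h1 : TensorProduct.map (counitMul k H) (mul' k H)
      = rTensor H (Coalgebra.counit) ∘ₗ TensorProduct.map (mul' k H) (mul' k H) := by
    apply TensorProduct.ext'; intro u v; simp [counitMul]
  rw [h1, LinearMap.comp_apply, aux_map_mul_mul, ← WeakBialgebra.comul_mul (k := k),
    Coalgebra.rTensor_counit_comul]
  simp

lemma theta_l [WeakBialgebra k H] (a b : H) :
    (TensorProduct.rid k H) (TensorProduct.map (mul' k H) (counitMul k H)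
      ((TensorProduct.tensorTensorTensorComm k H H H H)
        (Coalgebra.comul a ⊗ₜ[k] Coalgebra.comul b))) = a * b := by
  have h1 : TensorProduct.map (mul' k H) (counitMul k H)
      = lTensor H (Coalgebra.counit) ∘ₗ TensorProduct.map (mul' k H) (mul' k H) := by
    apply TensorProduct.ext'; intro u v; simp [counitMul]
  rw [h1, LinearMap.comp_apply, aux_map_mul_mul, ← WeakBialgebra.comul_mul (k := k),
    Coalgebra.lTensor_counit_comul]
  simp

/-- `εsAux x t = ∑ t₁ ε(x t₂)`. -/
noncomputable def εsAux (x : H) : H ⊗[k] H →ₗ[k] H :=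
  (TensorProduct.rid k H).toLinearMap
    ∘ₗ lTensor H (Coalgebra.counit ∘ₗ LinearMap.mulLeft k x)

lemma εsAux_tmul (x a b : H) :
    εsAux x (a ⊗ₜ[k] b) = Coalgebra.counit (R := k) (x * b) • a := by
  simp [εsAux]

lemma εsAux_zero_left (t : H ⊗[k] H) : εsAux (k := k) (0 : H) t = 0 := by
  induction t using TensorProduct.induction_on with
  | zero => simp
  | tmul a b => simp [εsAux_tmul]
  | add s t hs ht => simp only [map_add, hs, ht, add_zero]

lemma εsAux_add_left (y z : H) (t : H ⊗[k] H) :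
    εsAux (k := k) (y + z) t = εsAux y t + εsAux z t := by
  induction t using TensorProduct.induction_on with
  | zero => simp
  | tmul a b => simp [εsAux_tmul, add_mul, add_smul]
  | add s t hs ht =>
    simp only [map_add, hs, ht]; abel

lemma εs_eq (x : H) : εs k H x = εsAux (k := k) x (Coalgebra.comul (R := k) (1 : H)) := by
  have key : ∀ t : H ⊗[k] H,
      (TensorProduct.rid k H) (lTensor H (counitMul k H
          ∘ₗ (TensorProduct.comm k H H).toLinearMap)
        ((TensorProduct.assoc k H H H) (t ⊗ₜ[k] x))) = εsAux x t := by
    intro t; induction t using TensorProduct.induction_on with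
    | zero => simp
    | tmul a b => simp [counitMul, εsAux_tmul]
    | add s t hs ht => simp only [add_tmul, tmul_add, map_add, hs, ht]
  simp only [εs, LinearMap.comp_apply, LinearEquiv.coe_coe, TensorProduct.mk_apply]
  exact key _

lemma εs_one : εs k H (1 : H) = 1 := by
  rw [εs_eq]
  have h1 : εsAux (k := k) (1 : H)
      = (TensorProduct.rid k H).toLinearMap ∘ₗ lTensor H (Coalgebra.counit (R := k)) := by
    unfold εsAux; rw [LinearMap.mulLeft_one, LinearMap.comp_id]
  rw [h1]
  simp [Coalgebra.lTensor_counit_comul (R := k) (1 : H)]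

lemma comm_comm (t : H ⊗[k] H) :
    (TensorProduct.comm k H H) ((TensorProduct.comm k H H) t) = t := by
  induction t using TensorProduct.induction_on with
  | zero => simp
  | tmul a b => simp
  | add s t hs ht => simp only [map_add, hs, ht]

lemma counit_εs [WeakBialgebra k H] (x : H) :
    Coalgebra.counit (R := k) (εs k H x) = Coalgebra.counit (R := k) x := by
  have h := LinearMap.congr_fun (WeakBialgebra.weak_counit_op (k := k) (H := H))
    ((x ⊗ₜ[k] (1 : H)) ⊗ₜ[k] (1 : H))
  have hL : weakCounitLHS k H ((x ⊗ₜ[k] (1 : H)) ⊗ₜ[k] (1 : H))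
      = Coalgebra.counit (R := k) x := by
    simp [weakCounitLHS]
  have key : ∀ t : H ⊗[k] H,
      (TensorProduct.lid k k) (TensorProduct.map (counitMul k H) (counitMul k H)
        ((TensorProduct.assoc k (H ⊗[k] H) H H)
          (((TensorProduct.assoc k H H H).symm (x ⊗ₜ[k] t)) ⊗ₜ[k] (1 : H))))
      = Coalgebra.counit (R := k) (εsAux x ((TensorProduct.comm k H H) t)) := by
    intro t; induction t using TensorProduct.induction_on with
    | zero => simp
    | tmul a b => simp [counitMul, εsAux_tmul, smul_eq_mul]
    | add s t hs ht => simp only [tmul_add, add_tmul, map_add, hs, ht]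
  rw [hL] at h
  simp only [weakCounitRHS, LinearMap.comp_apply, rTensor_tmul, lTensor_tmul,
    LinearEquiv.coe_coe] at h
  rw [key, comm_comm] at h
  rw [εs_eq]
  exact h.symm

/-- `Ξ ((a⊗b) ⊗ (c⊗d)) = ε(cb) • (a ⊗ d)`. -/
noncomputable def Xi : ((H ⊗[k] H) ⊗[k] (H ⊗[k] H)) →ₗ[k] H ⊗[k] H :=
  (TensorProduct.lid k (H ⊗[k] H)).toLinearMap
    ∘ₗ rTensor (H ⊗[k] H) (counitMul k H ∘ₗ (TensorProduct.comm k H H).toLinearMap)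
    ∘ₗ (TensorProduct.tensorTensorTensorComm k H H H H).toLinearMap
    ∘ₗ rTensor (H ⊗[k] H) (TensorProduct.comm k H H).toLinearMap

lemma Xi_tmul (a b c d : H) :
    Xi ((a ⊗ₜ[k] b) ⊗ₜ[k] (c ⊗ₜ[k] d))
      = Coalgebra.counit (R := k) (c * b) • (a ⊗ₜ[k] d) := by
  simp [Xi, counitMul]

lemma comul_one_eq [WeakBialgebra k H] :
    Coalgebra.comul (R := k) (1 : H)
      = Xi (Coalgebra.comul (R := k) (1 : H) ⊗ₜ[k] Coalgebra.comul (R := k) (1 : H)) := by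
  set Θ0 : H ⊗[k] H →ₗ[k] H :=
    (TensorProduct.rid k H).toLinearMap ∘ₗ lTensor H (Coalgebra.counit (R := k)) with hΘ0
  have h := congrArg (fun t => rTensor H Θ0 t) (WeakBialgebra.weak_unit_op (k := k) (H := H))
  have hL : rTensor H Θ0
      (rTensor H (Coalgebra.comul (R := k)) (Coalgebra.comul (R := k) (1 : H)))
      = Coalgebra.comul (R := k) (1 : H) := by
    rw [← LinearMap.comp_apply, ← rTensor_comp]
    have h2 : Θ0 ∘ₗ Coalgebra.comul = LinearMap.id := by
      apply LinearMap.ext; intro a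
      simp [hΘ0, Coalgebra.lTensor_counit_comul (R := k) a]
    rw [h2, rTensor_id, LinearMap.id_apply]
  have key : ∀ u v : H ⊗[k] H,
      rTensor H Θ0 ((rTensor H (lTensor H (mul' k H ∘ₗ (TensorProduct.comm k H H).toLinearMap)))
        ((rTensor H (TensorProduct.assoc k H H H).toLinearMap)
          ((TensorProduct.assoc k (H ⊗[k] H) H H).symm (u ⊗ₜ[k] v))))
      = Xi (u ⊗ₜ[k] v) := by
    intro u v
    induction v using TensorProduct.induction_on with
    | zero => simp
    | tmul c d =>
      induction u using TensorProduct.induction_on with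
      | zero => simp
      | tmul a b => simp [Xi_tmul, counitMul, hΘ0, smul_tmul']
      | add s t hs ht => simp only [add_tmul, tmul_add, map_add, hs, ht]
    | add s t hs ht => simp only [tmul_add, add_tmul, map_add, hs, ht]
  rw [hL, weakUnitRHS, key] at h
  exact h

lemma rTensor_εs_comul_one [WeakBialgebra k H] :
    rTensor H (εs k H) (Coalgebra.comul (R := k) (1 : H))
      = Coalgebra.comul (R := k) (1 : H) := by
  have key : ∀ t : H ⊗[k] H, rTensor H (εs k H) t
      = Xi (Coalgebra.comul (R := k) (1 : H) ⊗ₜ[k] t) := by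
    intro t; induction t using TensorProduct.induction_on with
    | zero => simp
    | tmul a b =>
      have sub : ∀ u : H ⊗[k] H, Xi (u ⊗ₜ[k] (a ⊗ₜ[k] b)) = (εsAux a u) ⊗ₜ[k] b := by
        intro u; induction u using TensorProduct.induction_on with
        | zero => simp [εsAux_zero_left]
        | tmul c d => simp [Xi_tmul, εsAux_tmul, smul_tmul']
        | add s t hs ht => simp only [add_tmul, map_add, hs, ht, εsAux_add_left]
      rw [rTensor_tmul, sub, ← εs_eq]
    | add s t hs ht => simp only [tmul_add, add_tmul, map_add, hs, ht]
  rw [key, ← comul_one_eq]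

lemma εs_εs [WeakBialgebra k H] (x : H) : εs k H (εs k H x) = εs k H x := by
  have claim : ∀ t u : H ⊗[k] H,
      εsAux (εsAux (k := k) x u) t = εsAux x (Xi (t ⊗ₜ[k] u)) := by
    intro t
    induction t using TensorProduct.induction_on with
    | zero => intro u; simp
    | tmul c d =>
      intro u
      induction u using TensorProduct.induction_on with
      | zero => simp [εsAux_zero_left, εsAux_tmul]
      | tmul a b =>
        simp [εsAux_tmul, Xi_tmul, smul_mul_assoc, smul_smul, mul_comm]
      | add s t hs ht =>
        simp only [map_add, εsAux_add_left, tmul_add, hs, ht]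
    | add s t hs ht =>
      intro u
      simp only [map_add, add_tmul, hs, ht]
  rw [εs_eq (εs k H x), εs_eq x, claim, ← comul_one_eq, ← εs_eq]

lemma comul_εs [WeakBialgebra k H] (x : H) :
    Coalgebra.comul (R := k) (εs k H x)
      = Coalgebra.comul (R := k) (1 : H) * ((1 : H) ⊗ₜ[k] εs k H x) := by
  set g : H →ₗ[k] k := Coalgebra.counit ∘ₗ LinearMap.mulLeft k x with hg
  set L : (H ⊗[k] H) ⊗[k] H →ₗ[k] H ⊗[k] H :=
    (TensorProduct.rid k (H ⊗[k] H)).toLinearMap ∘ₗ lTensor (H ⊗[k] H) g with hL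
  have h := congrArg (fun t => L t) (WeakBialgebra.weak_unit (k := k) (H := H))
  have hLeft : L (rTensor H (Coalgebra.comul (R := k)) (Coalgebra.comul (R := k) (1 : H)))
      = Coalgebra.comul (R := k) (εs k H x) := by
    have h2 := aux_rid_lTensor_rTensor (k := k) (Coalgebra.comul (R := k) (A := H)) g
    have h3 := LinearMap.congr_fun h2 (Coalgebra.comul (R := k) (1 : H))
    simp only [LinearMap.comp_apply, LinearEquiv.coe_coe] at h3
    rw [hL, LinearMap.comp_apply, LinearEquiv.coe_toLinearMap, h3, εs_eq]
    rfl
  have key : ∀ u v : H ⊗[k] H,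
      L ((rTensor H (lTensor H (mul' k H)))
        ((rTensor H (TensorProduct.assoc k H H H).toLinearMap)
          ((TensorProduct.assoc k (H ⊗[k] H) H H).symm (u ⊗ₜ[k] v))))
      = u * ((1 : H) ⊗ₜ[k] εsAux x v) := by
    intro u v
    induction v using TensorProduct.induction_on with
    | zero => simp [εsAux]
    | tmul c d =>
      induction u using TensorProduct.induction_on with
      | zero => simp [zero_mul]
      | tmul a b =>
        simp [hL, hg, εsAux_tmul, Algebra.TensorProduct.tmul_mul_tmul,
          mul_smul_comm, smul_tmul']
      | add s t hs ht => simp only [add_tmul, map_add, hs, ht, add_mul]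
    | add s t hs ht => simp only [tmul_add, map_add, hs, ht, mul_add]
  rw [hLeft, weakUnitRHS, key, ← εs_eq] at h
  exact h

lemma rTensor_εs_comul_εs [WeakBialgebra k H] (x : H) :
    rTensor H (εs k H) (Coalgebra.comul (R := k) (εs k H x))
      = Coalgebra.comul (R := k) (εs k H x) := by
  have key : ∀ (u : H ⊗[k] H) (y : H),
      u * ((1 : H) ⊗ₜ[k] y) = lTensor H (LinearMap.mulRight k y) u := by
    intro u y; induction u using TensorProduct.induction_on with
    | zero => simp [zero_mul]
    | tmul a b => simp [Algebra.TensorProduct.tmul_mul_tmul]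
    | add s t hs ht => simp only [add_mul, map_add, hs, ht]
  rw [comul_εs, key, ← LinearMap.comp_apply, rTensor_comp_lTensor, ← lTensor_comp_rTensor,
    LinearMap.comp_apply, rTensor_εs_comul_one, ← key, ← comul_εs]


/-- `θr ((c⊗a) ⊗ (d⊗b)) = ε(cd) • (ab)`. -/
noncomputable def thetaR : (H ⊗[k] H) ⊗[k] (H ⊗[k] H) →ₗ[k] H :=
  (TensorProduct.lid k H).toLinearMap ∘ₗ TensorProduct.map (counitMul k H) (mul' k H)
    ∘ₗ (TensorProduct.tensorTensorTensorComm k H H H H).toLinearMap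

/-- `θl ((a⊗c) ⊗ (b⊗d)) = ε(cd) • (ab)`. -/
noncomputable def thetaL : (H ⊗[k] H) ⊗[k] (H ⊗[k] H) →ₗ[k] H :=
  (TensorProduct.rid k H).toLinearMap ∘ₗ TensorProduct.map (mul' k H) (counitMul k H)
    ∘ₗ (TensorProduct.tensorTensorTensorComm k H H H H).toLinearMap

/-- `θm ((a⊗c) ⊗ (b⊗d)) = ab ⊗ cd`. -/
noncomputable def thetaM : (H ⊗[k] H) ⊗[k] (H ⊗[k] H) →ₗ[k] H ⊗[k] H :=
  TensorProduct.map (mul' k H) (mul' k H)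
    ∘ₗ (TensorProduct.tensorTensorTensorComm k H H H H).toLinearMap

lemma thetaR_comul [WeakBialgebra k H] (a b : H) :
    thetaR (Coalgebra.comul a ⊗ₜ[k] Coalgebra.comul b) = a * b := by
  simpa [thetaR] using theta_r (k := k) a b

lemma thetaL_comul [WeakBialgebra k H] (a b : H) :
    thetaL (Coalgebra.comul a ⊗ₜ[k] Coalgebra.comul b) = a * b := by
  simpa [thetaL] using theta_l (k := k) a b

lemma thetaM_comul [WeakBialgebra k H] (a b : H) :
    thetaM (Coalgebra.comul a ⊗ₜ[k] Coalgebra.comul b) = Coalgebra.comul (a * b) := by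
  simp [thetaM, aux_map_mul_mul, WeakBialgebra.comul_mul (k := k)]

section Comodule

variable {X Y : Type u} [AddCommGroup X] [Module k X] [AddCommGroup Y] [Module k Y]
variable [WeakBialgebra k H]
variable (βX : X →ₗ[k] X ⊗[k] H) (βY : Y →ₗ[k] Y ⊗[k] H)

/-- Reorganizing map used for the double-coaction expressions. -/
noncomputable def bigPhi (θ : (H ⊗[k] H) ⊗[k] (H ⊗[k] H) →ₗ[k] H) :
    (X ⊗[k] (H ⊗[k] H)) ⊗[k] (Y ⊗[k] (H ⊗[k] H)) →ₗ[k] (X ⊗[k] Y) ⊗[k] H :=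
  lTensor (X ⊗[k] Y) θ
    ∘ₗ (TensorProduct.tensorTensorTensorComm k X (H ⊗[k] H) Y (H ⊗[k] H)).toLinearMap

noncomputable def bigPhiM :
    (X ⊗[k] (H ⊗[k] H)) ⊗[k] (Y ⊗[k] (H ⊗[k] H)) →ₗ[k] (X ⊗[k] Y) ⊗[k] (H ⊗[k] H) :=
  lTensor (X ⊗[k] Y) (thetaM (k := k) (H := H))
    ∘ₗ (TensorProduct.tensorTensorTensorComm k X (H ⊗[k] H) Y (H ⊗[k] H)).toLinearMap

lemma prodCoaction_tmul (x : X) (y : Y) :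
    prodCoaction βX βY (x ⊗ₜ[k] y)
      = lTensor (X ⊗[k] Y) (mul' k H)
          ((TensorProduct.tensorTensorTensorComm k X H Y H) (βX x ⊗ₜ[k] βY y)) := by
  simp [prodCoaction]

lemma truncIdem_tmul (x : X) (y : Y) :
    truncIdem βX βY (x ⊗ₜ[k] y)
      = (TensorProduct.rid k (X ⊗[k] Y)) (lTensor (X ⊗[k] Y) (counitMul k H)
          ((TensorProduct.tensorTensorTensorComm k X H Y H) (βX x ⊗ₜ[k] βY y))) := by
  simp [truncIdem]

lemma rTensor_truncIdem_prodCoaction (hX : IsCoaction βX) (hY : IsCoaction βY) :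
    rTensor H (truncIdem βX βY) ∘ₗ prodCoaction βX βY = prodCoaction βX βY := by
  apply TensorProduct.ext'; intro x y
  have key1 : ∀ (t : X ⊗[k] H) (s : Y ⊗[k] H),
      rTensor H (truncIdem βX βY) (lTensor (X ⊗[k] Y) (mul' k H)
        ((TensorProduct.tensorTensorTensorComm k X H Y H) (t ⊗ₜ[k] s)))
      = bigPhi (X := X) (Y := Y) (thetaR (k := k) (H := H))
          (((TensorProduct.assoc k X H H) (rTensor H βX t))
            ⊗ₜ[k] ((TensorProduct.assoc k Y H H) (rTensor H βY s))) := by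
    intro t s
    induction t using TensorProduct.induction_on with
    | zero => simp
    | tmul x0 a =>
      induction s using TensorProduct.induction_on with
      | zero => simp
      | tmul y0 b =>
        have key1' : ∀ (u : X ⊗[k] H) (v : Y ⊗[k] H),
            bigPhi (X := X) (Y := Y) (thetaR (k := k) (H := H))
              (((TensorProduct.assoc k X H H) (u ⊗ₜ[k] a))
                ⊗ₜ[k] ((TensorProduct.assoc k Y H H) (v ⊗ₜ[k] b)))
            = ((TensorProduct.rid k (X ⊗[k] Y)) (lTensor (X ⊗[k] Y) (counitMul k H)
                ((TensorProduct.tensorTensorTensorComm k X H Y H) (u ⊗ₜ[k] v))))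
                ⊗ₜ[k] (a * b) := by
          intro u v
          induction u using TensorProduct.induction_on with
          | zero => simp
          | tmul x1 c =>
            induction v using TensorProduct.induction_on with
            | zero => simp
            | tmul y1 d => simp [bigPhi, thetaR, counitMul, smul_tmul']
            | add s' t' hs ht => simp only [add_tmul, tmul_add, map_add, hs, ht]
          | add s' t' hs ht => simp only [add_tmul, tmul_add, map_add, hs, ht]
        simp only [tensorTensorTensorComm_tmul, lTensor_tmul, rTensor_tmul, mul'_apply,
          key1' (βX x0) (βY y0), truncIdem_tmul]
      | add s' t' hs ht => simp only [add_tmul, tmul_add, map_add, hs, ht]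
    | add s' t' hs ht => simp only [add_tmul, tmul_add, map_add, hs, ht]
  have key2 : ∀ (t : X ⊗[k] H) (s : Y ⊗[k] H),
      bigPhi (X := X) (Y := Y) (thetaR (k := k) (H := H))
        ((lTensor X (Coalgebra.comul (R := k)) t) ⊗ₜ[k] (lTensor Y (Coalgebra.comul (R := k)) s))
      = lTensor (X ⊗[k] Y) (mul' k H)
          ((TensorProduct.tensorTensorTensorComm k X H Y H) (t ⊗ₜ[k] s)) := by
    intro t s
    induction t using TensorProduct.induction_on with
    | zero => simp
    | tmul x0 a =>
      induction s using TensorProduct.induction_on with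
      | zero => simp
      | tmul y0 b => simp [bigPhi, thetaR_comul]
      | add s' t' hs ht => simp only [add_tmul, tmul_add, map_add, hs, ht]
    | add s' t' hs ht => simp only [add_tmul, tmul_add, map_add, hs, ht]
  have hx := LinearMap.congr_fun hX.1 x
  have hy := LinearMap.congr_fun hY.1 y
  simp only [LinearMap.comp_apply, LinearEquiv.coe_coe] at hx hy
  simp only [LinearMap.comp_apply, prodCoaction_tmul, key1, hx, hy, key2]

lemma prodCoaction_truncIdem (hX : IsCoaction βX) (hY : IsCoaction βY) :
    prodCoaction βX βY ∘ₗ truncIdem βX βY = prodCoaction βX βY := by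
  apply TensorProduct.ext'; intro x y
  have key1 : ∀ (t : X ⊗[k] H) (s : Y ⊗[k] H),
      prodCoaction βX βY ((TensorProduct.rid k (X ⊗[k] Y)) (lTensor (X ⊗[k] Y) (counitMul k H)
        ((TensorProduct.tensorTensorTensorComm k X H Y H) (t ⊗ₜ[k] s))))
      = bigPhi (X := X) (Y := Y) (thetaL (k := k) (H := H))
          (((TensorProduct.assoc k X H H) (rTensor H βX t))
            ⊗ₜ[k] ((TensorProduct.assoc k Y H H) (rTensor H βY s))) := by
    intro t s
    induction t using TensorProduct.induction_on with
    | zero => simp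
    | tmul x0 a =>
      induction s using TensorProduct.induction_on with
      | zero => simp
      | tmul y0 b =>
        have key1' : ∀ (u : X ⊗[k] H) (v : Y ⊗[k] H),
            bigPhi (X := X) (Y := Y) (thetaL (k := k) (H := H))
              (((TensorProduct.assoc k X H H) (u ⊗ₜ[k] a))
                ⊗ₜ[k] ((TensorProduct.assoc k Y H H) (v ⊗ₜ[k] b)))
            = Coalgebra.counit (R := k) (a * b) •
                (lTensor (X ⊗[k] Y) (mul' k H)
                  ((TensorProduct.tensorTensorTensorComm k X H Y H) (u ⊗ₜ[k] v))) := by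
          intro u v
          induction u using TensorProduct.induction_on with
          | zero => simp
          | tmul x1 c =>
            induction v using TensorProduct.induction_on with
            | zero => simp
            | tmul y1 d => simp [bigPhi, thetaL, counitMul, smul_tmul', tmul_smul]
            | add s' t' hs ht => simp only [add_tmul, tmul_add, map_add, hs, ht, smul_add]
          | add s' t' hs ht => simp only [add_tmul, tmul_add, map_add, hs, ht, smul_add]
        simp only [tensorTensorTensorComm_tmul, lTensor_tmul, rTensor_tmul,
          TensorProduct.rid_tmul, map_smul, key1' (βX x0) (βY y0), counitMul,
          LinearMap.comp_apply, mul'_apply, prodCoaction_tmul]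
      | add s' t' hs ht => simp only [add_tmul, tmul_add, map_add, hs, ht]
    | add s' t' hs ht => simp only [add_tmul, tmul_add, map_add, hs, ht]
  have key2 : ∀ (t : X ⊗[k] H) (s : Y ⊗[k] H),
      bigPhi (X := X) (Y := Y) (thetaL (k := k) (H := H))
        ((lTensor X (Coalgebra.comul (R := k)) t) ⊗ₜ[k] (lTensor Y (Coalgebra.comul (R := k)) s))
      = lTensor (X ⊗[k] Y) (mul' k H)
          ((TensorProduct.tensorTensorTensorComm k X H Y H) (t ⊗ₜ[k] s)) := by
    intro t s
    induction t using TensorProduct.induction_on with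
    | zero => simp
    | tmul x0 a =>
      induction s using TensorProduct.induction_on with
      | zero => simp
      | tmul y0 b => simp [bigPhi, thetaL_comul]
      | add s' t' hs ht => simp only [add_tmul, tmul_add, map_add, hs, ht]
    | add s' t' hs ht => simp only [add_tmul, tmul_add, map_add, hs, ht]
  have hx := LinearMap.congr_fun hX.1 x
  have hy := LinearMap.congr_fun hY.1 y
  simp only [LinearMap.comp_apply, LinearEquiv.coe_coe] at hx hy
  simp only [LinearMap.comp_apply, truncIdem_tmul, key1, hx, hy, key2, prodCoaction_tmul]

lemma prodCoaction_coassoc (hX : IsCoaction βX) (hY : IsCoaction βY) :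
    (TensorProduct.assoc k (X ⊗[k] Y) H H).toLinearMap
        ∘ₗ rTensor H (prodCoaction βX βY) ∘ₗ prodCoaction βX βY
      = lTensor (X ⊗[k] Y) (Coalgebra.comul (R := k)) ∘ₗ prodCoaction βX βY := by
  apply TensorProduct.ext'; intro x y
  have key1 : ∀ (t : X ⊗[k] H) (s : Y ⊗[k] H),
      (TensorProduct.assoc k (X ⊗[k] Y) H H)
        (rTensor H (prodCoaction βX βY) (lTensor (X ⊗[k] Y) (mul' k H)
          ((TensorProduct.tensorTensorTensorComm k X H Y H) (t ⊗ₜ[k] s))))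
      = bigPhiM (X := X) (Y := Y)
          (((TensorProduct.assoc k X H H) (rTensor H βX t))
            ⊗ₜ[k] ((TensorProduct.assoc k Y H H) (rTensor H βY s))) := by
    intro t s
    induction t using TensorProduct.induction_on with
    | zero => simp
    | tmul x0 a =>
      induction s using TensorProduct.induction_on with
      | zero => simp
      | tmul y0 b =>
        have key1' : ∀ (u : X ⊗[k] H) (v : Y ⊗[k] H),
            bigPhiM (X := X) (Y := Y)
              (((TensorProduct.assoc k X H H) (u ⊗ₜ[k] a))
                ⊗ₜ[k] ((TensorProduct.assoc k Y H H) (v ⊗ₜ[k] b)))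
            = (TensorProduct.assoc k (X ⊗[k] Y) H H)
                ((lTensor (X ⊗[k] Y) (mul' k H)
                  ((TensorProduct.tensorTensorTensorComm k X H Y H) (u ⊗ₜ[k] v)))
                  ⊗ₜ[k] (a * b)) := by
          intro u v
          induction u using TensorProduct.induction_on with
          | zero => simp
          | tmul x1 c =>
            induction v using TensorProduct.induction_on with
            | zero => simp
            | tmul y1 d => simp [bigPhiM, thetaM]
            | add s' t' hs ht => simp only [add_tmul, tmul_add, map_add, hs, ht]
          | add s' t' hs ht => simp only [add_tmul, tmul_add, map_add, hs, ht]
        simp only [tensorTensorTensorComm_tmul, lTensor_tmul, rTensor_tmul, mul'_apply,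
          key1' (βX x0) (βY y0), prodCoaction_tmul]
      | add s' t' hs ht => simp only [add_tmul, tmul_add, map_add, hs, ht]
    | add s' t' hs ht => simp only [add_tmul, tmul_add, map_add, hs, ht]
  have key2 : ∀ (t : X ⊗[k] H) (s : Y ⊗[k] H),
      bigPhiM (X := X) (Y := Y)
        ((lTensor X (Coalgebra.comul (R := k)) t) ⊗ₜ[k] (lTensor Y (Coalgebra.comul (R := k)) s))
      = lTensor (X ⊗[k] Y) (Coalgebra.comul (R := k))
          (lTensor (X ⊗[k] Y) (mul' k H)
            ((TensorProduct.tensorTensorTensorComm k X H Y H) (t ⊗ₜ[k] s))) := by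
    intro t s
    induction t using TensorProduct.induction_on with
    | zero => simp
    | tmul x0 a =>
      induction s using TensorProduct.induction_on with
      | zero => simp
      | tmul y0 b => simp [bigPhiM, thetaM_comul]
      | add s' t' hs ht => simp only [add_tmul, tmul_add, map_add, hs, ht]
    | add s' t' hs ht => simp only [add_tmul, tmul_add, map_add, hs, ht]
  have hx := LinearMap.congr_fun hX.1 x
  have hy := LinearMap.congr_fun hY.1 y
  simp only [LinearMap.comp_apply, LinearEquiv.coe_coe] at hx hy
  simp only [LinearMap.comp_apply, LinearEquiv.coe_coe, prodCoaction_tmul, key1, hx, hy, key2]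

lemma aux_rTensor_lTensor_comm {M N P Q : Type u} [AddCommGroup M] [Module k M]
    [AddCommGroup N] [Module k N] [AddCommGroup P] [Module k P] [AddCommGroup Q] [Module k Q]
    (f : M →ₗ[k] N) (g : P →ₗ[k] Q) (u : M ⊗[k] P) :
    rTensor Q f (lTensor M g u) = lTensor N g (rTensor P f u) := by
  rw [← LinearMap.comp_apply, ← LinearMap.comp_apply, rTensor_comp_lTensor, lTensor_comp_rTensor]

lemma truncIdem_eq_pt (w : X ⊗[k] Y) :
    truncIdem βX βY w
      = (TensorProduct.rid k (X ⊗[k] Y))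
          (lTensor (X ⊗[k] Y) (Coalgebra.counit (R := k)) (prodCoaction βX βY w)) := by
  induction w using TensorProduct.induction_on with
  | zero => simp
  | tmul x y =>
    rw [truncIdem_tmul, prodCoaction_tmul,
      ← LinearMap.comp_apply (lTensor (X ⊗[k] Y) (Coalgebra.counit (R := k))), ← lTensor_comp]
    rfl
  | add s t hs ht => simp only [map_add, hs, ht]

lemma truncIdem_idem_pt (hX : IsCoaction βX) (hY : IsCoaction βY) (w : X ⊗[k] Y) :
    truncIdem βX βY (truncIdem βX βY w) = truncIdem βX βY w := by
  have h := LinearMap.congr_fun (prodCoaction_truncIdem βX βY hX hY) w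
  simp only [LinearMap.comp_apply] at h
  rw [truncIdem_eq_pt βX βY (truncIdem βX βY w), h, ← truncIdem_eq_pt]

lemma truncIdem_of_mem (hX : IsCoaction βX) (hY : IsCoaction βY)
    (z : ↥(LinearMap.range (truncIdem βX βY))) :
    truncIdem βX βY (z : X ⊗[k] Y) = (z : X ⊗[k] Y) := by
  obtain ⟨w, hw⟩ := z.2
  rw [← hw, truncIdem_idem_pt βX βY hX hY w]

lemma truncProj_subtype (hX : IsCoaction βX) (hY : IsCoaction βY)
    (z : ↥(LinearMap.range (truncIdem βX βY))) :
    truncProj βX βY ((LinearMap.range (truncIdem βX βY)).subtype z) = z := by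
  apply Subtype.ext
  simp only [truncProj, LinearMap.codRestrict_apply, Submodule.subtype_apply]
  exact truncIdem_of_mem βX βY hX hY z

lemma truncCoaction_comp_truncProj (hX : IsCoaction βX) (hY : IsCoaction βY) :
    truncCoaction βX βY ∘ₗ truncProj βX βY
      = rTensor H (truncProj βX βY) ∘ₗ prodCoaction βX βY := by
  have hsp : (LinearMap.range (truncIdem βX βY)).subtype ∘ₗ truncProj βX βY
      = truncIdem βX βY := LinearMap.subtype_comp_codRestrict _ _ _
  unfold truncCoaction
  rw [LinearMap.comp_assoc, LinearMap.comp_assoc, hsp, ← LinearMap.comp_assoc,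
    LinearMap.comp_assoc, prodCoaction_truncIdem βX βY hX hY]

lemma isCoaction_trunc (hX : IsCoaction βX) (hY : IsCoaction βY) :
    IsCoaction (truncCoaction βX βY) := by
  constructor
  · apply LinearMap.ext; intro z
    have e1 : truncCoaction βX βY z
        = rTensor H (truncProj βX βY)
            (prodCoaction βX βY ((LinearMap.range (truncIdem βX βY)).subtype z)) := rfl
    have e2 : rTensor H (truncCoaction βX βY) (truncCoaction βX βY z)
        = rTensor H (rTensor H (truncProj βX βY))
            (rTensor H (prodCoaction βX βY)
              (prodCoaction βX βY ((LinearMap.range (truncIdem βX βY)).subtype z))) := by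
      rw [e1, ← rTensor_comp_apply, ← rTensor_comp_apply,
        truncCoaction_comp_truncProj βX βY hX hY]
    simp only [LinearMap.comp_apply, LinearEquiv.coe_coe, e2]
    have e3 := LinearMap.congr_fun (aux_assoc_rTensor_rTensor (k := k) (P := H) (Q := H)
      (truncProj βX βY)) (rTensor H (prodCoaction βX βY)
        (prodCoaction βX βY ((LinearMap.range (truncIdem βX βY)).subtype z)))
    simp only [LinearMap.comp_apply, LinearEquiv.coe_coe] at e3
    rw [e3]
    have e4 := LinearMap.congr_fun (prodCoaction_coassoc βX βY hX hY)
      ((LinearMap.range (truncIdem βX βY)).subtype z)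
    simp only [LinearMap.comp_apply, LinearEquiv.coe_coe] at e4
    rw [e4, aux_rTensor_lTensor_comm, e1]
  · apply LinearMap.ext; intro z
    have e1 : truncCoaction βX βY z
        = rTensor H (truncProj βX βY)
            (prodCoaction βX βY ((LinearMap.range (truncIdem βX βY)).subtype z)) := rfl
    simp only [LinearMap.comp_apply, LinearEquiv.coe_coe, e1, LinearMap.id_apply]
    have e2 := LinearMap.congr_fun (aux_rid_lTensor_rTensor (k := k)
      (truncProj βX βY) (Coalgebra.counit (R := k) (A := H)))
      (prodCoaction βX βY ((LinearMap.range (truncIdem βX βY)).subtype z))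
    simp only [LinearMap.comp_apply, LinearEquiv.coe_coe] at e2
    rw [e2, ← truncIdem_eq_pt]
    have e3 : truncIdem βX βY ((LinearMap.range (truncIdem βX βY)).subtype z)
        = (LinearMap.range (truncIdem βX βY)).subtype z := truncIdem_of_mem βX βY hX hY z
    rw [e3]
    exact truncProj_subtype βX βY hX hY z

end Comodule

section Hspecific

variable [WeakBialgebra k H]

lemma comul_comp_mul' :
    Coalgebra.comul ∘ₗ mul' k H
      = rTensor H (mul' k H)
          ∘ₗ prodCoaction (Coalgebra.comul (R := k) (A := H)) Coalgebra.comul := by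
  apply TensorProduct.ext'; intro x y
  have hmm : ∀ w : (H ⊗[k] H) ⊗[k] (H ⊗[k] H),
      rTensor H (mul' k H) (lTensor (H ⊗[k] H) (mul' k H) w)
        = TensorProduct.map (mul' k H) (mul' k H) w := by
    intro w; rw [← LinearMap.comp_apply, rTensor_comp_lTensor]
  simp only [LinearMap.comp_apply, prodCoaction_tmul, mul'_apply, hmm,
    aux_map_mul_mul, WeakBialgebra.comul_mul (k := k)]

lemma mul'_truncIdem :
    mul' k H ∘ₗ truncIdem (Coalgebra.comul (R := k) (A := H)) Coalgebra.comul
      = mul' k H := by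
  apply TensorProduct.ext'; intro x y
  have key : ∀ u v : H ⊗[k] H,
      mul' k H ((TensorProduct.rid k (H ⊗[k] H)) (lTensor (H ⊗[k] H) (counitMul k H)
        ((TensorProduct.tensorTensorTensorComm k H H H H) (u ⊗ₜ[k] v))))
      = thetaL (u ⊗ₜ[k] v) := by
    intro u v
    induction u using TensorProduct.induction_on with
    | zero => simp
    | tmul a b =>
      induction v using TensorProduct.induction_on with
      | zero => simp
      | tmul c d => simp [thetaL, counitMul]
      | add s t hs ht => simp only [add_tmul, tmul_add, map_add, hs, ht]
    | add s t hs ht => simp only [add_tmul, tmul_add, map_add, hs, ht]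
  simp only [LinearMap.comp_apply, truncIdem_tmul, mul'_apply, key, thetaL_comul]

lemma counit_counit_truncIdem :
    ((TensorProduct.lid k k).toLinearMap
        ∘ₗ TensorProduct.map (Coalgebra.counit (R := k)) (Coalgebra.counit (R := k)))
        ∘ₗ truncIdem (Coalgebra.comul (R := k) (A := H)) Coalgebra.comul
      = counitMul k H := by
  apply TensorProduct.ext'; intro x y
  have key : ∀ u v : H ⊗[k] H,
      (TensorProduct.lid k k) (TensorProduct.map (Coalgebra.counit (R := k))
        (Coalgebra.counit (R := k))
        ((TensorProduct.rid k (H ⊗[k] H)) (lTensor (H ⊗[k] H) (counitMul k H)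
          ((TensorProduct.tensorTensorTensorComm k H H H H) (u ⊗ₜ[k] v)))))
      = counitMul k H (((TensorProduct.lid k H) (rTensor H (Coalgebra.counit (R := k)) u))
          ⊗ₜ[k] ((TensorProduct.lid k H) (rTensor H (Coalgebra.counit (R := k)) v))) := by
    intro u v
    induction u using TensorProduct.induction_on with
    | zero => simp
    | tmul a b =>
      induction v using TensorProduct.induction_on with
      | zero => simp
      | tmul c d => simp [counitMul, smul_eq_mul, mul_comm, mul_left_comm]
      | add s t hs ht => simp only [add_tmul, tmul_add, map_add, hs, ht, smul_add]
    | add s t hs ht => simp only [add_tmul, tmul_add, map_add, hs, ht, smul_add]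
  simp only [LinearMap.comp_apply, truncIdem_tmul, LinearEquiv.coe_coe]
  rw [key, Coalgebra.rTensor_counit_comul, Coalgebra.rTensor_counit_comul]
  simp

lemma comul_mulSubtype :
    Coalgebra.comul ∘ₗ (mul' k H
        ∘ₗ (LinearMap.range (truncIdem (Coalgebra.comul (R := k) (A := H))
              Coalgebra.comul)).subtype)
      = rTensor H (mul' k H
            ∘ₗ (LinearMap.range (truncIdem (Coalgebra.comul (R := k) (A := H))
                  Coalgebra.comul)).subtype)
          ∘ₗ truncCoaction (Coalgebra.comul (R := k) (A := H)) Coalgebra.comul := by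
  have hXc : IsCoaction (Coalgebra.comul (R := k) (A := H)) := isCoaction_comul
  have hsp : (LinearMap.range (truncIdem (Coalgebra.comul (R := k) (A := H))
        Coalgebra.comul)).subtype
      ∘ₗ truncProj (Coalgebra.comul (R := k) (A := H)) Coalgebra.comul
      = truncIdem (Coalgebra.comul (R := k) (A := H)) Coalgebra.comul :=
    LinearMap.subtype_comp_codRestrict _ _ _
  apply LinearMap.ext; intro z
  have e1 : truncCoaction (Coalgebra.comul (R := k) (A := H)) Coalgebra.comul z
      = rTensor H (truncProj (Coalgebra.comul (R := k) (A := H)) Coalgebra.comul)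
          (prodCoaction (Coalgebra.comul (R := k) (A := H)) Coalgebra.comul
            ((LinearMap.range (truncIdem (Coalgebra.comul (R := k) (A := H))
                Coalgebra.comul)).subtype z)) := rfl
  simp only [LinearMap.comp_apply, e1, ← rTensor_comp_apply]
  rw [LinearMap.comp_assoc, hsp]
  rw [rTensor_comp, LinearMap.comp_apply]
  have e2 := LinearMap.congr_fun
    (rTensor_truncIdem_prodCoaction (Coalgebra.comul (R := k) (A := H)) Coalgebra.comul hXc hXc)
    ((LinearMap.range (truncIdem (Coalgebra.comul (R := k) (A := H))
        Coalgebra.comul)).subtype z)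
  simp only [LinearMap.comp_apply] at e2
  rw [e2]
  have e3 := LinearMap.congr_fun (comul_comp_mul' (k := k) (H := H))
    ((LinearMap.range (truncIdem (Coalgebra.comul (R := k) (A := H))
        Coalgebra.comul)).subtype z)
  simp only [LinearMap.comp_apply] at e3
  rw [← e3]

lemma sourceProj_subtype (z : ↥(LinearMap.range (εs k H))) :
    sourceProj k H ((LinearMap.range (εs k H)).subtype z) = z := by
  apply Subtype.ext
  simp only [sourceProj, LinearMap.codRestrict_apply, Submodule.subtype_apply]
  obtain ⟨w, hw⟩ := z.2
  rw [← hw, εs_εs]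

lemma rTensor_εs_comul_mem (z : ↥(LinearMap.range (εs k H))) :
    rTensor H (εs k H) (Coalgebra.comul (R := k) ((LinearMap.range (εs k H)).subtype z))
      = Coalgebra.comul (R := k) ((LinearMap.range (εs k H)).subtype z) := by
  obtain ⟨w, hw⟩ := z.2
  simp only [Submodule.subtype_apply, ← hw]
  exact rTensor_εs_comul_εs w

lemma comul_subtype_unit :
    Coalgebra.comul ∘ₗ (LinearMap.range (εs k H)).subtype
      = rTensor H (LinearMap.range (εs k H)).subtype ∘ₗ unitCoaction k H := by
  apply LinearMap.ext; intro z
  have h1 : unitCoaction k H z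
      = rTensor H (sourceProj k H)
          (Coalgebra.comul ((LinearMap.range (εs k H)).subtype z)) := rfl
  have h2 : (LinearMap.range (εs k H)).subtype ∘ₗ sourceProj k H = εs k H :=
    LinearMap.subtype_comp_codRestrict _ _ _
  simp only [LinearMap.comp_apply, h1, ← rTensor_comp_apply, h2]
  exact (rTensor_εs_comul_mem z).symm

lemma isCoaction_unit : IsCoaction (unitCoaction k H) := by
  have h2 : (LinearMap.range (εs k H)).subtype ∘ₗ sourceProj k H = εs k H :=
    LinearMap.subtype_comp_codRestrict _ _ _
  constructor
  · apply LinearMap.ext; intro z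
    have e1 : unitCoaction k H z
        = rTensor H (sourceProj k H)
            (Coalgebra.comul ((LinearMap.range (εs k H)).subtype z)) := rfl
    have hcomp : unitCoaction k H ∘ₗ sourceProj k H
        = rTensor H (sourceProj k H) ∘ₗ Coalgebra.comul ∘ₗ εs k H := by
      unfold unitCoaction
      rw [LinearMap.comp_assoc, LinearMap.comp_assoc, h2]
    have e2 : rTensor H (unitCoaction k H) (unitCoaction k H z)
        = rTensor H (rTensor H (sourceProj k H))
            (rTensor H (Coalgebra.comul (R := k))
              (Coalgebra.comul ((LinearMap.range (εs k H)).subtype z))) := by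
      rw [e1, ← rTensor_comp_apply, hcomp, rTensor_comp, rTensor_comp,
        LinearMap.comp_apply, LinearMap.comp_apply, rTensor_εs_comul_mem z]
    simp only [LinearMap.comp_apply, LinearEquiv.coe_coe, e2]
    have e3 := LinearMap.congr_fun (aux_assoc_rTensor_rTensor (k := k) (P := H) (Q := H)
      (sourceProj k H)) (rTensor H (Coalgebra.comul (R := k))
        (Coalgebra.comul ((LinearMap.range (εs k H)).subtype z)))
    simp only [LinearMap.comp_apply, LinearEquiv.coe_coe] at e3
    rw [e3, Coalgebra.coassoc_apply, aux_rTensor_lTensor_comm, e1]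
  · apply LinearMap.ext; intro z
    have e1 : unitCoaction k H z
        = rTensor H (sourceProj k H)
            (Coalgebra.comul ((LinearMap.range (εs k H)).subtype z)) := rfl
    simp only [LinearMap.comp_apply, LinearEquiv.coe_coe, e1, LinearMap.id_apply]
    have e2 := LinearMap.congr_fun (aux_rid_lTensor_rTensor (k := k)
      (sourceProj k H) (Coalgebra.counit (R := k) (A := H)))
      (Coalgebra.comul ((LinearMap.range (εs k H)).subtype z))
    simp only [LinearMap.comp_apply, LinearEquiv.coe_coe] at e2
    rw [e2]
    have e3 : (TensorProduct.rid k H)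
        (lTensor H (Coalgebra.counit (R := k))
          (Coalgebra.comul ((LinearMap.range (εs k H)).subtype z)))
        = (LinearMap.range (εs k H)).subtype z := by
      rw [Coalgebra.lTensor_counit_comul]; simp
    rw [e3]
    exact sourceProj_subtype z

end Hspecific

section MainLemmas

variable [WeakBialgebra k H]

lemma Psi_obj {V : Type u} [AddCommGroup V] [Module k V]
    (γ : V ⊗[k] H →ₗ[k] V) (hγ : IsAction γ) : IsCModule (PsiStr γ) := by
  refine ⟨?_, ?_, ?_⟩
  · -- naturality
    intro X Y _ _ _ _ βX βY hX hY g hg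
    apply TensorProduct.ext'; intro v x
    have hgx := LinearMap.congr_fun hg x
    simp only [LinearMap.comp_apply] at hgx
    simp only [LinearMap.comp_apply, lTensor_tmul, PsiStr_apply, hgx]
    exact aux_rTensor_lTensor_comm g (γ ∘ₗ TensorProduct.mk k V H v) (βX x)
  · -- unit axiom
    intro v
    have h0 : (LinearMap.range (εs k H)).subtype (unitLax k H 1) = 1 := by
      simp [unitLax, sourceProj, Submodule.subtype_apply, LinearMap.codRestrict_apply,
        Algebra.linearMap_apply, map_one, εs_one]
    have h1 : unitCoaction k H (unitLax k H 1)
        = rTensor H (sourceProj k H) (Coalgebra.comul (R := k) (1 : H)) := by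
      have : unitCoaction k H (unitLax k H 1)
          = rTensor H (sourceProj k H)
              (Coalgebra.comul ((LinearMap.range (εs k H)).subtype (unitLax k H 1))) := rfl
      rw [this, h0]
    rw [PsiStr_apply, h1]
    have key : ∀ t : H ⊗[k] H,
        TensorProduct.map (unitOplax k H) (LinearMap.id (M := V))
          (lTensor ↥(LinearMap.range (εs k H)) (γ ∘ₗ TensorProduct.mk k V H v)
            (rTensor H (sourceProj k H) t))
        = TensorProduct.map (Coalgebra.counit ∘ₗ εs k H) (γ ∘ₗ TensorProduct.mk k V H v) t := by
      intro t; induction t using TensorProduct.induction_on with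
      | zero => simp
      | tmul a b =>
        simp [unitOplax, sourceProj, Submodule.subtype_apply, LinearMap.codRestrict_apply]
      | add s t hs ht => simp only [map_add, hs, ht]
    rw [key]
    have h2 : Coalgebra.counit ∘ₗ εs k H = Coalgebra.counit (R := k) (A := H) :=
      LinearMap.ext fun a => counit_εs a
    rw [h2]
    have h3 : ∀ t : H ⊗[k] H,
        TensorProduct.map (Coalgebra.counit (R := k)) (γ ∘ₗ TensorProduct.mk k V H v) t
          = LinearMap.lTensor k (γ ∘ₗ TensorProduct.mk k V H v)
              (rTensor H (Coalgebra.counit (R := k)) t) := by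
      intro t; induction t using TensorProduct.induction_on with
      | zero => simp
      | tmul a b => simp
      | add s t hs ht => simp only [map_add, hs, ht]
    rw [h3, Coalgebra.rTensor_counit_comul]
    simp [hγ.1 v]
  · -- multiplication axiom
    intro X Y _ _ _ _ βX βY hX hY
    have hsp : (LinearMap.range (truncIdem βX βY)).subtype ∘ₗ truncProj βX βY
        = truncIdem βX βY := LinearMap.subtype_comp_codRestrict _ _ _
    apply TensorProduct.ext'; intro v w
    induction w using TensorProduct.induction_on with
    | zero => simp
    | tmul x y =>
      -- LHS
      have l3 := LinearMap.congr_fun (truncCoaction_comp_truncProj βX βY hX hY) (x ⊗ₜ[k] y)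
      simp only [LinearMap.comp_apply] at l3
      have lhs : rTensor V (LinearMap.range (truncIdem βX βY)).subtype
          ((PsiStr γ).c _ (truncCoaction βX βY)
            (lTensor V (truncProj βX βY) (v ⊗ₜ[k] (x ⊗ₜ[k] y))))
          = lTensor (X ⊗[k] Y) (γ ∘ₗ TensorProduct.mk k V H v)
              (prodCoaction βX βY (x ⊗ₜ[k] y)) := by
        rw [lTensor_tmul, PsiStr_apply, l3, aux_rTensor_lTensor_comm,
          ← rTensor_comp_apply, hsp]
        congr 1
        exact LinearMap.congr_fun (rTensor_truncIdem_prodCoaction βX βY hX hY) (x ⊗ₜ[k] y)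
      -- RHS
      have keyR : ∀ t : X ⊗[k] H,
          (TensorProduct.assoc k X Y V).symm
            (lTensor X ((PsiStr γ).c Y βY)
              ((TensorProduct.assoc k X V Y)
                ((lTensor X (γ ∘ₗ TensorProduct.mk k V H v) t) ⊗ₜ[k] y)))
          = lTensor (X ⊗[k] Y) (γ ∘ₗ TensorProduct.mk k V H v)
              (lTensor (X ⊗[k] Y) (mul' k H)
                ((TensorProduct.tensorTensorTensorComm k X H Y H) (t ⊗ₜ[k] βY y))) := by
        intro t
        induction t using TensorProduct.induction_on with
        | zero => simp
        | tmul x0 a =>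
          have keyR2 : ∀ s : Y ⊗[k] H,
              (TensorProduct.assoc k X Y V).symm
                (x0 ⊗ₜ[k] (lTensor Y (γ ∘ₗ TensorProduct.mk k V H (γ (v ⊗ₜ[k] a))) s))
              = lTensor (X ⊗[k] Y) (γ ∘ₗ TensorProduct.mk k V H v)
                  (lTensor (X ⊗[k] Y) (mul' k H)
                    ((TensorProduct.tensorTensorTensorComm k X H Y H)
                      ((x0 ⊗ₜ[k] a) ⊗ₜ[k] s))) := by
            intro s
            induction s using TensorProduct.induction_on with
            | zero => simp
            | tmul y0 b =>
              have hact := LinearMap.congr_fun hγ.2 ((v ⊗ₜ[k] a) ⊗ₜ[k] b)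
              simp only [LinearMap.comp_apply, rTensor_tmul, lTensor_tmul,
                LinearEquiv.coe_coe, TensorProduct.assoc_tmul, mul'_apply] at hact
              simp [hact]
            | add s1 s2 h1 h2 => simp only [tmul_add, add_tmul, map_add, h1, h2]
          simp only [lTensor_tmul, LinearEquiv.coe_coe, TensorProduct.assoc_tmul,
            PsiStr_apply]
          exact keyR2 (βY y)
        | add t1 t2 h1 h2 => simp only [tmul_add, add_tmul, map_add, h1, h2]
      simp only [LinearMap.comp_apply, LinearEquiv.coe_coe, TensorProduct.assoc_symm_tmul,
        rTensor_tmul, lhs]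
      rw [PsiStr_apply, keyR (βX x), prodCoaction_tmul]
    | add w1 w2 h1 h2 => simp only [tmul_add, map_add, h1, h2]

lemma Phi_obj {V : Type u} [AddCommGroup V] [Module k V]
    (cV : CModuleStr k H V) (h : IsCModule cV) : IsAction (PhiAction cV) := by
  obtain ⟨hnat, hunit, hmul⟩ := h
  constructor
  · -- unit
    intro v
    have hsub := hnat _ H (unitCoaction k H) Coalgebra.comul isCoaction_unit isCoaction_comul
      ((LinearMap.range (εs k H)).subtype) comul_subtype_unit
    have h1 := LinearMap.congr_fun hsub (v ⊗ₜ[k] unitLax k H 1)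
    simp only [LinearMap.comp_apply, lTensor_tmul] at h1
    have h2 : (LinearMap.range (εs k H)).subtype (unitLax k H 1) = 1 := by
      simp [unitLax, sourceProj, Submodule.subtype_apply, LinearMap.codRestrict_apply,
        Algebra.linearMap_apply, map_one, εs_one]
    rw [h2] at h1
    have h3 : ∀ u : ↥(LinearMap.range (εs k H)) ⊗[k] V,
        TensorProduct.map (Coalgebra.counit (R := k)) (LinearMap.id (M := V))
          (rTensor V ((LinearMap.range (εs k H)).subtype) u)
        = TensorProduct.map (unitOplax k H) (LinearMap.id (M := V)) u := by
      intro u; induction u using TensorProduct.induction_on with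
      | zero => simp
      | tmul a b => simp [unitOplax]
      | add s t hs ht => simp only [map_add, hs, ht]
    simp only [PhiAction, LinearMap.comp_apply, LinearEquiv.coe_coe, ← h1, h3,
      hunit v]
    simp
  · -- multiplicativity
    apply TensorProduct.ext'; intro q y
    induction q using TensorProduct.induction_on with
    | zero => simp
    | tmul v x =>
      simp only [LinearMap.comp_apply, rTensor_tmul, LinearEquiv.coe_coe,
        TensorProduct.assoc_tmul, lTensor_tmul, mul'_apply]
      -- goal : PhiAction cV (PhiAction cV (v ⊗ₜ x) ⊗ₜ y) = PhiAction cV (v ⊗ₜ (x*y))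
      have hXc : IsCoaction (Coalgebra.comul (R := k) (A := H)) := isCoaction_comul
      have hTc := isCoaction_trunc (Coalgebra.comul (R := k) (A := H)) Coalgebra.comul hXc hXc
      have hsp : (LinearMap.range (truncIdem (Coalgebra.comul (R := k) (A := H))
            Coalgebra.comul)).subtype
          ∘ₗ truncProj (Coalgebra.comul (R := k) (A := H)) Coalgebra.comul
          = truncIdem (Coalgebra.comul (R := k) (A := H)) Coalgebra.comul :=
        LinearMap.subtype_comp_codRestrict _ _ _
      set ι := (LinearMap.range (truncIdem (Coalgebra.comul (R := k) (A := H))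
          Coalgebra.comul)).subtype with hι
      set p := truncProj (Coalgebra.comul (R := k) (A := H)) Coalgebra.comul with hp
      -- Q-hat
      set Q := cV.c _ (truncCoaction (Coalgebra.comul (R := k) (A := H)) Coalgebra.comul)
        (v ⊗ₜ[k] p (x ⊗ₜ[k] y)) with hQ
      -- E
      have hm := hmul H H Coalgebra.comul Coalgebra.comul hXc hXc
      have hE := LinearMap.congr_fun hm (v ⊗ₜ[k] (x ⊗ₜ[k] y))
      simp only [LinearMap.comp_apply, lTensor_tmul, LinearEquiv.coe_coe,
        TensorProduct.assoc_symm_tmul, rTensor_tmul] at hE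
      -- hE : rTensor V ι Q = E
      -- Step R : PhiAction cV (v ⊗ (x*y)) = lid (map counitMul id (rTensor V ι Q))
      have hnat2 := hnat _ H
        (truncCoaction (Coalgebra.comul (R := k) (A := H)) Coalgebra.comul)
        Coalgebra.comul hTc hXc (mul' k H ∘ₗ ι) comul_mulSubtype
      have hmu := LinearMap.congr_fun hnat2 (v ⊗ₜ[k] p (x ⊗ₜ[k] y))
      simp only [LinearMap.comp_apply, lTensor_tmul] at hmu
      -- hmu : rTensor V (mul' ∘ₗ ι) Q = cV.c H comul (v ⊗ₜ (mul' (ι (p (x⊗y)))))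
      have hμP : mul' k H (ι (p (x ⊗ₜ[k] y))) = x * y := by
        have hPxy : ι (p (x ⊗ₜ[k] y))
            = truncIdem (Coalgebra.comul (R := k) (A := H)) Coalgebra.comul (x ⊗ₜ[k] y) :=
          LinearMap.congr_fun hsp (x ⊗ₜ[k] y)
        rw [hPxy]
        have := LinearMap.congr_fun (mul'_truncIdem (k := k) (H := H)) (x ⊗ₜ[k] y)
        simp only [LinearMap.comp_apply, mul'_apply] at this
        exact this
      rw [hμP] at hmu
      have hsplit : ∀ u : ↥(LinearMap.range (truncIdem (Coalgebra.comul (R := k) (A := H))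
            Coalgebra.comul)) ⊗[k] V,
          TensorProduct.map (Coalgebra.counit (R := k)) (LinearMap.id (M := V))
            (rTensor V (mul' k H ∘ₗ ι) u)
          = TensorProduct.map (counitMul k H) (LinearMap.id (M := V)) (rTensor V ι u) := by
        intro u; induction u using TensorProduct.induction_on with
        | zero => simp
        | tmul a b => simp [counitMul]
        | add s t hs ht => simp only [map_add, hs, ht]
      have stepR : PhiAction cV (v ⊗ₜ[k] (x * y))
          = (TensorProduct.lid k V) (TensorProduct.map (counitMul k H) (LinearMap.id (M := V))
              (rTensor V ι Q)) := by
        simp only [PhiAction, LinearMap.comp_apply, LinearEquiv.coe_coe, ← hmu, hsplit]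
        rfl
      -- Step L : PhiAction cV (PhiAction cV (v⊗x) ⊗ y) = lid (map εε id (rTensor V ι Q))
      set εε : H ⊗[k] H →ₗ[k] k := (TensorProduct.lid k k).toLinearMap
        ∘ₗ TensorProduct.map (Coalgebra.counit (R := k)) (Coalgebra.counit (R := k)) with hεε
      have keyL : ∀ q : H ⊗[k] V,
          (TensorProduct.lid k V) (TensorProduct.map εε (LinearMap.id (M := V))
            ((TensorProduct.assoc k H H V).symm
              (lTensor H (cV.c H Coalgebra.comul)
                ((TensorProduct.assoc k H V H) (q ⊗ₜ[k] y)))))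
          = PhiAction cV ((TensorProduct.lid k V)
              (TensorProduct.map (Coalgebra.counit (R := k)) (LinearMap.id (M := V)) q)
                ⊗ₜ[k] y) := by
        intro q
        induction q using TensorProduct.induction_on with
        | zero => simp
        | tmul h0 u =>
          have subL : ∀ r : H ⊗[k] V,
              (TensorProduct.lid k V) (TensorProduct.map εε (LinearMap.id (M := V))
                ((TensorProduct.assoc k H H V).symm (h0 ⊗ₜ[k] r)))
              = Coalgebra.counit (R := k) h0 •
                  (TensorProduct.lid k V) (TensorProduct.map (Coalgebra.counit (R := k))
                    (LinearMap.id (M := V)) r) := by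
            intro r
            induction r using TensorProduct.induction_on with
            | zero => simp
            | tmul g w => simp [hεε, smul_smul, mul_comm]
            | add s t hs ht => simp only [tmul_add, map_add, hs, ht, smul_add]
          simp only [TensorProduct.assoc_tmul, LinearEquiv.coe_coe, lTensor_tmul, subL]
          have hsm : (Coalgebra.counit (R := k) h0 • u) ⊗ₜ[k] y
              = Coalgebra.counit (R := k) h0 • (u ⊗ₜ[k] y) :=
            (TensorProduct.smul_tmul' _ _ _).symm
          simp only [PhiAction, LinearMap.comp_apply, LinearEquiv.coe_coe,
            TensorProduct.map_tmul, TensorProduct.lid_tmul, LinearMap.id_coe, id_eq,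
            hsm, map_smul]
        | add s t hs ht => simp only [add_tmul, map_add, hs, ht]
      have stepL : PhiAction cV (PhiAction cV (v ⊗ₜ[k] x) ⊗ₜ[k] y)
          = (TensorProduct.lid k V) (TensorProduct.map εε (LinearMap.id (M := V))
              (rTensor V ι Q)) := by
        rw [hE]
        rw [keyL (cV.c H Coalgebra.comul (v ⊗ₜ[k] x))]
        simp [PhiAction]
      -- identify the two
      have hPι : truncIdem (Coalgebra.comul (R := k) (A := H)) Coalgebra.comul ∘ₗ ι = ι := by
        apply LinearMap.ext; intro z
        exact truncIdem_of_mem _ _ hXc hXc z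
      have hPE : rTensor V (truncIdem (Coalgebra.comul (R := k) (A := H)) Coalgebra.comul)
          (rTensor V ι Q) = rTensor V ι Q := by
        rw [← rTensor_comp_apply, hPι]
      have hfinal : TensorProduct.map εε (LinearMap.id (M := V)) (rTensor V ι Q)
          = TensorProduct.map (counitMul k H) (LinearMap.id (M := V)) (rTensor V ι Q) := by
        rw [← hPE]
        have hcomp : ∀ u : (H ⊗[k] H) ⊗[k] V,
            TensorProduct.map εε (LinearMap.id (M := V))
              (rTensor V (truncIdem (Coalgebra.comul (R := k) (A := H)) Coalgebra.comul) u)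
            = TensorProduct.map (εε ∘ₗ truncIdem (Coalgebra.comul (R := k) (A := H))
                Coalgebra.comul) (LinearMap.id (M := V)) u := by
          intro u; induction u using TensorProduct.induction_on with
          | zero => simp
          | tmul a b => simp
          | add s t hs ht => simp only [map_add, hs, ht]
        rw [hcomp, hεε, counit_counit_truncIdem, hPE]
      rw [stepL, stepR, hfinal]
    | add q1 q2 h1 h2 => simp only [add_tmul, map_add, h1, h2]

end MainLemmas

end WeakBialgebraPaper

open WeakBialgebraPaper in
/-- For a weak bialgebra `H` there are functors `Φ : M_{(M^H,U)} → M_H` and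
`Ψ : M_H → M_{(M^H,U)}` with `Φ ∘ Ψ = 1_{M_H}`:  `Φ` turns a right `(M^H,U)`-module
into a right `H`-module, `Ψ` turns a right `H`-module into a right `(M^H,U)`-module,
both are compatible with morphisms, and `Φ ∘ Ψ` is the identity. -/
theorem dual_category_functors (k H : Type) [Field k] [Ring H] [Algebra k H]
    [Coalgebra k H] [WeakBialgebra k H] :
    -- `Φ` is well defined on objects
    (∀ (V : Type) (_ : AddCommGroup V) (_ : Module k V) (_ : FiniteDimensional k V)
        (cV : CModuleStr k H V), IsCModule cV → IsAction (PhiAction cV)) ∧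
    -- `Φ` is well defined on morphisms
    (∀ (V W : Type) (_ : AddCommGroup V) (_ : Module k V) (_ : AddCommGroup W)
        (_ : Module k W) (cV : CModuleStr k H V) (cW : CModuleStr k H W),
        IsCModule cV → IsCModule cW →
      ∀ φ : V →ₗ[k] W,
        (∀ (X : Type) (_ : AddCommGroup X) (_ : Module k X)
            (βX : X →ₗ[k] X ⊗[k] H), IsCoaction βX →
          cW.c X βX ∘ₗ LinearMap.rTensor X φ = LinearMap.lTensor X φ ∘ₗ cV.c X βX) →
        φ ∘ₗ PhiAction cV = PhiAction cW ∘ₗ LinearMap.rTensor H φ) ∧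
    -- `Ψ` is well defined on objects
    (∀ (V : Type) (_ : AddCommGroup V) (_ : Module k V) (_ : FiniteDimensional k V)
        (γ : V ⊗[k] H →ₗ[k] V), IsAction γ → IsCModule (PsiStr γ)) ∧
    -- `Ψ` is well defined on morphisms
    (∀ (V W : Type) (_ : AddCommGroup V) (_ : Module k V) (_ : AddCommGroup W)
        (_ : Module k W) (γV : V ⊗[k] H →ₗ[k] V) (γW : W ⊗[k] H →ₗ[k] W),
        IsAction γV → IsAction γW →
      ∀ φ : V →ₗ[k] W, φ ∘ₗ γV = γW ∘ₗ LinearMap.rTensor H φ →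
        ∀ (X : Type) (_ : AddCommGroup X) (_ : Module k X)
            (βX : X →ₗ[k] X ⊗[k] H), IsCoaction βX →
          (PsiStr γW).c X βX ∘ₗ LinearMap.rTensor X φ =
            LinearMap.lTensor X φ ∘ₗ (PsiStr γV).c X βX) ∧
    -- `Φ ∘ Ψ = 1_{M_H}`
    (∀ (V : Type) (_ : AddCommGroup V) (_ : Module k V) (_ : FiniteDimensional k V)
        (γ : V ⊗[k] H →ₗ[k] V), IsAction γ → PhiAction (PsiStr γ) = γ) := by
  refine ⟨?_, ?_, ?_, ?_, ?_⟩
  · intro V _ _ _ cV h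
    exact Phi_obj cV h
  · intro V W _ _ _ _ cV cW hV hW φ hφ
    exact Phi_mor cV cW φ
      (hφ H inferInstance inferInstance Coalgebra.comul isCoaction_comul)
  · intro V _ _ _ γ hγ
    exact Psi_obj γ hγ
  · intro V W _ _ _ _ γV γW hV hW φ hφ X _ _ βX hβ
    exact Psi_mor γV γW φ hφ βX
  · intro V _ _ _ γ hγ
    exact Phi_Psi_ptwise γ
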